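/- arXiv:2511.01161 — 2 statements merged into one kernel-verified Lean document; each statement's English description precedes it below -/
import Mathlib

section
/- Let n ≥ 1 be an integer, δ ∈ (0, n] and p ∈ (1, ∞). There exists a constant C > 0, depending only on n, δ and p, such that for every weight w ∈ A_{p,δ} one has ln w ∈ BMO(ℝⁿ, ℋ^δ_∞) and ‖ln w‖_{BMO(ℝⁿ,ℋ^δ_∞)} ≤ C · [w]_{A_{p,δ}}^{max{1, 1/(p−1)}}. -/
open scoped ENNReal
open Set MeasureTheory

noncomputable section

/-- An axis-parallel cube in `ℝⁿ`, described by its lower corner and positive side length. -/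
structure Cube (n : ℕ) where
  corner : Fin n → ℝ
  side : ℝ
  side_pos : 0 < side

namespace Cube

/-- The half-open cube `∏ᵢ [cornerᵢ, cornerᵢ + side)` as a set of points. -/
def toSet {n : ℕ} (Q : Cube n) : Set (Fin n → ℝ) :=
  {x | ∀ i, Q.corner i ≤ x i ∧ x i < Q.corner i + Q.side}

/-- A cube is dyadic if it has the form `2^k·(z + [0,1)ⁿ)` with `k ∈ ℤ`, `z ∈ ℤⁿ`. -/
def IsDyadic {n : ℕ} (Q : Cube n) : Prop :=
  ∃ (k : ℤ) (z : Fin n → ℤ), Q.side = (2:ℝ) ^ k ∧ ∀ i, Q.corner i = (z i : ℝ) * (2:ℝ) ^ k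

/-- `Q'` is a dyadic subcube of `Q`, i.e. obtained from `Q` by repeated bisection. -/
def IsDyadicSubcube {n : ℕ} (Q' Q : Cube n) : Prop :=
  ∃ (k : ℕ) (z : Fin n → ℕ), (∀ i, z i < 2 ^ k) ∧
    Q'.side = Q.side / 2 ^ k ∧ ∀ i, Q'.corner i = Q.corner i + (z i : ℝ) * (Q.side / 2 ^ k)

/-- The concentric dilate `t·Q` of a cube. -/
def dilate {n : ℕ} (Q : Cube n) (t : ℝ) (ht : 0 < t) : Cube n :=
  ⟨fun i => Q.corner i + Q.side / 2 - t * Q.side / 2, t * Q.side, mul_pos ht Q.side_pos⟩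

end Cube

/-- The Hausdorff content `ℋ^δ_∞`. -/
def hContent (n : ℕ) (δ : ℝ) (E : Set (Fin n → ℝ)) : ℝ≥0∞ :=
  ⨅ (Qs : ℕ → Cube n) (_ : E ⊆ ⋃ i, (Qs i).toSet), ∑' i, ENNReal.ofReal ((Qs i).side ^ δ)

/-- The dyadic Hausdorff content `~ℋ^δ_∞`. -/
def dContent (n : ℕ) (δ : ℝ) (E : Set (Fin n → ℝ)) : ℝ≥0∞ :=
  ⨅ (Qs : ℕ → Cube n) (_ : (∀ i, (Qs i).IsDyadic) ∧ E ⊆ ⋃ i, (Qs i).toSet),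
    ∑' i, ENNReal.ofReal ((Qs i).side ^ δ)

/-- The Choquet integral `∫_E f dℋ^δ_∞`. -/
def integH (n : ℕ) (δ : ℝ) (f : (Fin n → ℝ) → ℝ) (E : Set (Fin n → ℝ)) : ℝ≥0∞ :=
  ∫⁻ t in Ioi (0:ℝ), hContent n δ {x | x ∈ E ∧ t < f x}

/-- The Choquet integral `∫_E f d~ℋ^δ_∞` w.r.t. the dyadic Hausdorff content. -/
def integD (n : ℕ) (δ : ℝ) (f : (Fin n → ℝ) → ℝ) (E : Set (Fin n → ℝ)) : ℝ≥0∞ :=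
  ∫⁻ t in Ioi (0:ℝ), dContent n δ {x | x ∈ E ∧ t < f x}

/-- A property holds `ℋ^δ_∞`-a.e. -/
def AEContent (n : ℕ) (δ : ℝ) (P : (Fin n → ℝ) → Prop) : Prop :=
  hContent n δ {x | ¬ P x} = 0

/-- `ℋ^δ_∞`-quasicontinuity. -/
def QuasiCont (n : ℕ) (δ : ℝ) (f : (Fin n → ℝ) → ℝ) : Prop :=
  ∀ ε : ℝ, 0 < ε → ∃ O : Set (Fin n → ℝ),
    IsOpen O ∧ hContent n δ O < ENNReal.ofReal ε ∧ ContinuousOn f Oᶜ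

/-- `L¹_loc(ℝⁿ, ℋ^δ_∞)`. -/
def MemL1loc (n : ℕ) (δ : ℝ) (f : (Fin n → ℝ) → ℝ) : Prop :=
  QuasiCont n δ f ∧ ∀ K : Set (Fin n → ℝ), IsCompact K → integH n δ (fun x => |f x|) K < ⊤

/-- `L^∞(ℝⁿ, ℋ^δ_∞)`. -/
def MemLinf (n : ℕ) (δ : ℝ) (f : (Fin n → ℝ) → ℝ) : Prop :=
  QuasiCont n δ f ∧ ∃ M : ℝ, AEContent n δ (fun x => |f x| ≤ M)

/-- The `BMO(ℝⁿ, ℋ^δ_∞)` seminorm. -/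
def bmoNorm (n : ℕ) (δ : ℝ) (f : (Fin n → ℝ) → ℝ) : ℝ≥0∞ :=
  ⨆ Q : Cube n, ⨅ c : ℝ,
    integH n δ (fun x => |f x - c|) Q.toSet / hContent n δ Q.toSet

/-- Membership in `BMO(ℝⁿ, ℋ^δ_∞)`. -/
def MemBMO (n : ℕ) (δ : ℝ) (f : (Fin n → ℝ) → ℝ) : Prop :=
  MemL1loc n δ f ∧ bmoNorm n δ f < ⊤

/-- `essinf_{x ∈ Q} f := inf {t ∈ (0,∞) : ℋ^δ_∞({x ∈ Q : f x < t}) > 0}`. -/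
def essInfQ (n : ℕ) (δ : ℝ) (f : (Fin n → ℝ) → ℝ) (Q : Cube n) : ℝ :=
  sInf {t : ℝ | 0 < t ∧ 0 < hContent n δ {x | x ∈ Q.toSet ∧ f x < t}}

/-- The `BLO(ℝⁿ, ℋ^δ_∞)` seminorm. -/
def bloNorm (n : ℕ) (δ : ℝ) (f : (Fin n → ℝ) → ℝ) : ℝ≥0∞ :=
  ⨆ Q : Cube n,
    integH n δ (fun x => |f x - essInfQ n δ f Q|) Q.toSet / hContent n δ Q.toSet

/-- Membership in `BLO(ℝⁿ, ℋ^δ_∞)`. -/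
def MemBLO (n : ℕ) (δ : ℝ) (f : (Fin n → ℝ) → ℝ) : Prop :=
  MemL1loc n δ f ∧ bloNorm n δ f < ⊤

/-- A weight: locally Choquet-integrable, quasicontinuous, positive `ℋ^δ_∞`-a.e. -/
def IsWeight (n : ℕ) (δ : ℝ) (w : (Fin n → ℝ) → ℝ) : Prop :=
  MemL1loc n δ w ∧ AEContent n δ (fun x => 0 < w x)

/-- The capacitary Muckenhoupt `A_{p,δ}` constant, for `p > 1`. -/
def apConst (n : ℕ) (δ p : ℝ) (w : (Fin n → ℝ) → ℝ) : ℝ≥0∞ :=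
  ⨆ Q : Cube n,
    (integH n δ w Q.toSet / hContent n δ Q.toSet) *
      (integH n δ (fun x => w x ^ (-(1 / (p - 1)))) Q.toSet / hContent n δ Q.toSet) ^ (p - 1)

/-- Membership in `A_{p,δ}`, `p > 1`. -/
def MemAp (n : ℕ) (δ p : ℝ) (w : (Fin n → ℝ) → ℝ) : Prop :=
  IsWeight n δ w ∧ apConst n δ p w < ⊤

/-- The Hardy–Littlewood maximal operator w.r.t. `ℋ^δ_∞`. -/
def maxOp (n : ℕ) (δ : ℝ) (g : (Fin n → ℝ) → ℝ) (x : Fin n → ℝ) : ℝ≥0∞ :=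
  ⨆ (Q : Cube n) (_ : x ∈ Q.toSet),
    integH n δ (fun y => |g y|) Q.toSet / hContent n δ Q.toSet

/-- The capacitary `A_{1,δ}` constant. -/
def a1Const (n : ℕ) (δ : ℝ) (w : (Fin n → ℝ) → ℝ) : ℝ≥0∞ :=
  sInf {c : ℝ≥0∞ | 0 < c ∧
    AEContent n δ (fun x => maxOp n δ w x ≤ c * ENNReal.ofReal (w x))}

/-- Membership in `A_{1,δ}`. -/
def MemA1 (n : ℕ) (δ : ℝ) (w : (Fin n → ℝ) → ℝ) : Prop :=
  IsWeight n δ w ∧ a1Const n δ w < ⊤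

/-- The `A_{p,δ}` constant for `p ∈ [1,∞)` (it is the `A_{1,δ}` constant when `p = 1`). -/
def apConstGen (n : ℕ) (δ p : ℝ) (w : (Fin n → ℝ) → ℝ) : ℝ≥0∞ :=
  if p = 1 then a1Const n δ w else apConst n δ p w

/-- Membership in `A_{p,δ}` for `p ∈ [1,∞)` (meaning `A_{1,δ}` when `p = 1`). -/
def MemApGen (n : ℕ) (δ p : ℝ) (w : (Fin n → ℝ) → ℝ) : Prop :=
  IsWeight n δ w ∧ apConstGen n δ p w < ⊤

/-- The weighted `BMO^q_w(ℝⁿ, ℋ^δ_∞)` seminorm. -/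
def bmoWNorm (n : ℕ) (δ q : ℝ) (w f : (Fin n → ℝ) → ℝ) : ℝ≥0∞ :=
  ⨆ Q : Cube n, ⨅ c : ℝ,
    (integH n δ (fun x => |f x - c| ^ q * w x) Q.toSet / integH n δ w Q.toSet) ^ (1 / q)

/-- Membership in `BMO^q_w(ℝⁿ, ℋ^δ_∞)`. -/
def MemBMOw (n : ℕ) (δ q : ℝ) (w f : (Fin n → ℝ) → ℝ) : Prop :=
  QuasiCont n δ f ∧
    (∀ K : Set (Fin n → ℝ), IsCompact K → integH n δ (fun x => |f x| ^ q * w x) K < ⊤) ∧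
    bmoWNorm n δ q w f < ⊤

/-- The integral average `f_{Q,δ}` with respect to the dyadic Hausdorff content. -/
def avgQ (n : ℕ) (δ : ℝ) (f : (Fin n → ℝ) → ℝ) (Q : Cube n) : ℝ :=
  ((integD n δ f (Q.toSet ∩ {x | 0 ≤ f x})).toReal -
      (integD n δ (fun x => -f x) (Q.toSet ∩ {x | f x < 0})).toReal) /
    ((dContent n δ (Q.toSet ∩ {x | 0 ≤ f x})).toReal +
      (dContent n δ (Q.toSet ∩ {x | f x < 0})).toReal)

/-!
For a cube `Q` let `α` and `β` be the Choquet averages of `w` and `w ^ (-q)` over `Q`, where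
`q = 1/(p-1)`. The pointwise inequality `|log x - log α| ≤ x/α + q⁻¹ αᵠ x⁻ᵠ` and the
quasi-subadditivity of the Choquet integral bound the mean oscillation of `log w` on `Q` by
`2 + 2q⁻¹ αᵠβ`. The `A_{p,δ}` condition gives `αᵠβ ≤ [w]ᵠ`, while Chebyshev's inequality for
`w` and `w ^ (-q)` gives `αᵠβ ≥ 2^(-q-2)`; so `[w]` is bounded below by a constant depending
only on `p`, and then `2 + 2q⁻¹ [w]ᵠ ≤ C [w] ^ max 1 q`.
-/

open Real
open scoped NNReal

namespace Cube

variable {n : ℕ}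

theorem toSet_eq_pi (Q : Cube n) :
    Q.toSet = univ.pi fun i => Ico (Q.corner i) (Q.corner i + Q.side) := by
  ext x
  simp [toSet]

theorem volume_toSet (Q : Cube n) : volume Q.toSet = ENNReal.ofReal (Q.side ^ (n : ℝ)) := by
  rw [toSet_eq_pi, volume_pi_pi]
  simp only [Real.volume_Ico, add_sub_cancel_left, Finset.prod_const, Finset.card_univ,
    Fintype.card_fin]
  rw [← ENNReal.ofReal_pow Q.side_pos.le, rpow_natCast]

theorem toSet_subset_Icc (Q : Cube n) : Q.toSet ⊆ Icc Q.corner fun i => Q.corner i + Q.side :=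
  fun _ hx => ⟨fun i => (hx i).1, fun i => (hx i).2.le⟩

theorem exists_isOpen_superset_subset_dilate (Q : Cube n) :
    ∃ U, IsOpen U ∧ Q.toSet ⊆ U ∧ U ⊆ (Q.dilate 3 three_pos).toSet := by
  have hℓ := Q.side_pos
  refine ⟨univ.pi fun i => Ioo (Q.corner i - Q.side) (Q.corner i + 2 * Q.side),
    isOpen_set_pi finite_univ fun _ _ => isOpen_Ioo, fun x hx i _ => ?_, fun x hx i => ?_⟩
  · constructor <;> linarith [hx i]
  · obtain ⟨h₁, h₂⟩ := hx i (mem_univ i)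
    simp only [dilate]
    constructor <;> linarith

end Cube

theorem IsCompact.exists_subset_cube {n : ℕ} {K : Set (Fin n → ℝ)} (hK : IsCompact K) :
    ∃ Q : Cube n, K ⊆ Q.toSet := by
  obtain ⟨r, hr⟩ := hK.isBounded.subset_closedBall 0
  refine ⟨⟨fun _ => -|r|, 2 * |r| + 1, by positivity⟩, fun x hx i => ?_⟩
  have hxi : |x i| ≤ |r| :=
    ((norm_le_pi_norm x i).trans (mem_closedBall_zero_iff.1 (hr hx))).trans (le_abs_self r)
  constructor <;> linarith [abs_le.1 hxi]

section HausdorffContent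

variable {n : ℕ} {δ : ℝ}

theorem hContent_mono {E F : Set (Fin n → ℝ)} (h : E ⊆ F) : hContent n δ E ≤ hContent n δ F :=
  le_iInf₂ fun Qs hcov => iInf₂_le Qs (h.trans hcov)

theorem hContent_le_tsum {E : Set (Fin n → ℝ)} (Qs : ℕ → Cube n) (hcov : E ⊆ ⋃ i, (Qs i).toSet) :
    hContent n δ E ≤ ∑' i, ENNReal.ofReal ((Qs i).side ^ δ) :=
  iInf₂_le Qs hcov

theorem exists_tsum_lt_of_hContent_lt {E : Set (Fin n → ℝ)} {ε : ℝ≥0∞}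
    (h : hContent n δ E < ε) :
    ∃ Qs : ℕ → Cube n, E ⊆ ⋃ i, (Qs i).toSet ∧ ∑' i, ENNReal.ofReal ((Qs i).side ^ δ) < ε := by
  simpa only [hContent, iInf_lt_iff, exists_prop] using h

theorem exists_cubes_tsum_lt (hδ : 0 < δ) {ε : ℝ≥0∞} (hε : ε ≠ 0) :
    ∃ Qs : ℕ → Cube n, ∑' i, ENNReal.ofReal ((Qs i).side ^ δ) < ε := by
  obtain ⟨ε', hε'pos, hsum⟩ := ENNReal.exists_pos_sum_of_countable hε ℕ
  refine ⟨fun i => ⟨0, (ε' i : ℝ) ^ δ⁻¹, rpow_pos_of_pos (hε'pos i) _⟩, ?_⟩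
  convert hsum using 3 with i
  rw [rpow_inv_rpow (ε' i).coe_nonneg hδ.ne', ENNReal.ofReal_coe_nnreal]

theorem hContent_empty (hδ : 0 < δ) : hContent n δ (∅ : Set (Fin n → ℝ)) = 0 := by
  refine le_antisymm (ENNReal.le_of_forall_pos_le_add fun ε hε _ => ?_) bot_le
  obtain ⟨Qs, hQs⟩ := exists_cubes_tsum_lt (n := n) hδ (ENNReal.coe_ne_zero.2 hε.ne')
  simpa using (hContent_le_tsum Qs (empty_subset _)).trans hQs.le

theorem hContent_iUnion_le (E : ℕ → Set (Fin n → ℝ)) :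
    hContent n δ (⋃ i, E i) ≤ ∑' i, hContent n δ (E i) := by
  refine ENNReal.le_of_forall_pos_le_add fun ε hε hfin => ?_
  obtain ⟨ε', hε'pos, hsum⟩ :=
    ENNReal.exists_pos_sum_of_countable (ENNReal.coe_ne_zero.2 hε.ne') ℕ
  have hcover : ∀ i, ∃ Qs : ℕ → Cube n, E i ⊆ ⋃ j, (Qs j).toSet ∧
      ∑' j, ENNReal.ofReal ((Qs j).side ^ δ) < hContent n δ (E i) + ε' i :=
    fun i => exists_tsum_lt_of_hContent_lt <| ENNReal.lt_add_right
      (ne_top_of_le_ne_top hfin.ne (ENNReal.le_tsum i)) (ENNReal.coe_ne_zero.2 (hε'pos i).ne')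
  choose Qs hcov hQs using hcover
  let e : ℕ ≃ ℕ × ℕ := Nat.pairEquiv.symm
  have hcov' : (⋃ i, E i) ⊆ ⋃ k, (Qs (e k).1 (e k).2).toSet := by
    refine iUnion_subset fun i x hx => ?_
    obtain ⟨j, hj⟩ := mem_iUnion.1 (hcov i hx)
    exact mem_iUnion.2 ⟨e.symm (i, j), by simpa using hj⟩
  calc hContent n δ (⋃ i, E i)
      ≤ ∑' k, ENNReal.ofReal ((Qs (e k).1 (e k).2).side ^ δ) := hContent_le_tsum _ hcov'
    _ = ∑' (i) (j), ENNReal.ofReal ((Qs i j).side ^ δ) :=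
      (e.tsum_eq fun ij => ENNReal.ofReal ((Qs ij.1 ij.2).side ^ δ)).trans ENNReal.tsum_prod'
    _ ≤ ∑' i, (hContent n δ (E i) + ε' i) := ENNReal.tsum_le_tsum fun i => (hQs i).le
    _ ≤ ∑' i, hContent n δ (E i) + ε := by
      rw [ENNReal.tsum_add]
      gcongr

variable (n) in
def hContentOuterMeasure (hδ : 0 < δ) : OuterMeasure (Fin n → ℝ) where
  measureOf := hContent n δ
  empty := hContent_empty hδ
  mono := hContent_mono
  iUnion_nat s _ := hContent_iUnion_le s

theorem hContent_union_le (hδ : 0 < δ) (E F : Set (Fin n → ℝ)) :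
    hContent n δ (E ∪ F) ≤ hContent n δ E + hContent n δ F :=
  measure_union_le (μ := hContentOuterMeasure n hδ) E F

theorem hContent_le_of_subset_cube (hδ : 0 < δ) {E : Set (Fin n → ℝ)} {Q : Cube n}
    (hE : E ⊆ Q.toSet) : hContent n δ E ≤ ENNReal.ofReal (Q.side ^ δ) := by
  refine ENNReal.le_of_forall_pos_le_add fun ε hε _ => ?_
  obtain ⟨Qs, hQs⟩ := exists_cubes_tsum_lt (n := n) hδ (ENNReal.coe_ne_zero.2 hε.ne')
  let R : ℕ → Cube n := fun i => Nat.rec Q (fun j _ => Qs j) i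
  calc hContent n δ E ≤ ∑' i, ENNReal.ofReal ((R i).side ^ δ) :=
        hContent_le_tsum R fun x hx => mem_iUnion.2 ⟨0, hE hx⟩
    _ = ENNReal.ofReal (Q.side ^ δ) + ∑' i, ENNReal.ofReal ((Qs i).side ^ δ) :=
        tsum_eq_zero_add' ENNReal.summable
    _ ≤ ENNReal.ofReal (Q.side ^ δ) + ε := by gcongr

/-- Either some covering cube is at least as large as `Q`, or comparing Lebesgue measures with
`ℓᵢ ^ n ≤ ℓ(Q) ^ (n - δ) * ℓᵢ ^ δ` gives the bound. -/
theorem ofReal_side_rpow_le_hContent (hδ : 0 ≤ δ) (hδn : δ ≤ n) (Q : Cube n) :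
    ENNReal.ofReal (Q.side ^ δ) ≤ hContent n δ Q.toSet := by
  refine le_iInf₂ fun Qs hcov => ?_
  by_cases hbig : ∃ i, Q.side ≤ (Qs i).side
  · obtain ⟨i, hi⟩ := hbig
    exact (ENNReal.ofReal_le_ofReal (rpow_le_rpow Q.side_pos.le hi hδ)).trans
      (ENNReal.le_tsum i)
  push Not at hbig
  set c := ENNReal.ofReal (Q.side ^ ((n : ℝ) - δ))
  have hsplit : ∀ ℓ : ℝ, 0 < ℓ → ℓ ^ (n : ℝ) = ℓ ^ ((n : ℝ) - δ) * ℓ ^ δ := fun ℓ hℓ => by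
    rw [← rpow_add hℓ, sub_add_cancel]
  have hvol : c * ENNReal.ofReal (Q.side ^ δ) ≤ c * ∑' i, ENNReal.ofReal ((Qs i).side ^ δ) :=
    calc c * ENNReal.ofReal (Q.side ^ δ) = volume Q.toSet := by
          rw [Cube.volume_toSet, hsplit _ Q.side_pos,
            ENNReal.ofReal_mul (rpow_pos_of_pos Q.side_pos _).le]
      _ ≤ ∑' i, volume (Qs i).toSet := (measure_mono hcov).trans (measure_iUnion_le _)
      _ ≤ ∑' i, c * ENNReal.ofReal ((Qs i).side ^ δ) := ENNReal.tsum_le_tsum fun i => by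
          have hℓ := (Qs i).side_pos
          rw [Cube.volume_toSet, hsplit _ hℓ,
            ← ENNReal.ofReal_mul (rpow_pos_of_pos Q.side_pos _).le]
          gcongr
          exact (hbig i).le
      _ = c * ∑' i, ENNReal.ofReal ((Qs i).side ^ δ) := ENNReal.tsum_mul_left
  exact (ENNReal.mul_le_mul_iff_right (ENNReal.ofReal_pos.2 (rpow_pos_of_pos Q.side_pos _)).ne'
    ENNReal.ofReal_ne_top).1 hvol

theorem hContent_cube_ne_zero (hδ : 0 ≤ δ) (hδn : δ ≤ n) (Q : Cube n) :
    hContent n δ Q.toSet ≠ 0 :=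
  ((ENNReal.ofReal_pos.2 (rpow_pos_of_pos Q.side_pos δ)).trans_le
    (ofReal_side_rpow_le_hContent hδ hδn Q)).ne'

theorem hContent_cube_ne_top (hδ : 0 < δ) (Q : Cube n) : hContent n δ Q.toSet ≠ ⊤ :=
  ((hContent_le_of_subset_cube hδ subset_rfl).trans_lt ENNReal.ofReal_lt_top).ne

theorem exists_isOpen_superset_hContent_lt (hδ : 0 < δ) {N : Set (Fin n → ℝ)}
    (hN : hContent n δ N = 0) {ε : ℝ} (hε : 0 < ε) :
    ∃ O, IsOpen O ∧ N ⊆ O ∧ hContent n δ O < ENNReal.ofReal ε := by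
  set c : ℝ := 3 ^ δ
  have hc : 0 < c := by positivity
  obtain ⟨Qs, hcov, hsum⟩ := exists_tsum_lt_of_hContent_lt
    (hN.trans_lt (ENNReal.ofReal_pos.2 (div_pos hε hc)))
  choose U hUo hQU hUQ using fun i => (Qs i).exists_isOpen_superset_subset_dilate
  refine ⟨⋃ i, U i, isOpen_iUnion hUo, hcov.trans (iUnion_mono hQU), ?_⟩
  calc hContent n δ (⋃ i, U i) ≤ ∑' i, hContent n δ (U i) := hContent_iUnion_le U
    _ ≤ ∑' i, ENNReal.ofReal c * ENNReal.ofReal ((Qs i).side ^ δ) :=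
      ENNReal.tsum_le_tsum fun i => (hContent_le_of_subset_cube hδ (hUQ i)).trans_eq <| by
        rw [← ENNReal.ofReal_mul hc.le, Cube.dilate, mul_rpow zero_le_three (Qs i).side_pos.le]
    _ = ENNReal.ofReal c * ∑' i, ENNReal.ofReal ((Qs i).side ^ δ) := ENNReal.tsum_mul_left
    _ < ENNReal.ofReal c * ENNReal.ofReal (ε / c) :=
      ENNReal.mul_lt_mul_right (by simp [hc]) ENNReal.ofReal_ne_top hsum
    _ = ENNReal.ofReal ε := by rw [← ENNReal.ofReal_mul hc.le, mul_div_cancel₀ _ hc.ne']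

end HausdorffContent

section ChoquetIntegral

variable {n : ℕ} {δ : ℝ}

theorem measurable_hContent_superlevel (f : (Fin n → ℝ) → ℝ) (E : Set (Fin n → ℝ)) :
    Measurable fun t : ℝ => hContent n δ {x | x ∈ E ∧ t < f x} :=
  Antitone.measurable fun _ _ hst => hContent_mono fun _ hx => ⟨hx.1, hst.trans_lt hx.2⟩

theorem integH_mono_set {f : (Fin n → ℝ) → ℝ} {E F : Set (Fin n → ℝ)} (h : E ⊆ F) :
    integH n δ f E ≤ integH n δ f F :=
  lintegral_mono fun _ => hContent_mono fun _ hx => ⟨h hx.1, hx.2⟩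

theorem integH_mono_fun {f g : (Fin n → ℝ) → ℝ} {E : Set (Fin n → ℝ)}
    (h : ∀ x ∈ E, f x ≤ g x) : integH n δ f E ≤ integH n δ g E :=
  lintegral_mono fun _ => hContent_mono fun x hx => ⟨hx.1, hx.2.trans_le (h x hx.1)⟩

theorem lintegral_Ioi_comp_const_mul {φ : ℝ → ℝ≥0∞} (hφ : Measurable φ) {a : ℝ} (ha : 0 < a) :
    ∫⁻ t in Ioi (0 : ℝ), φ (a * t) = ENNReal.ofReal a⁻¹ * ∫⁻ t in Ioi (0 : ℝ), φ t := by
  have hm : Measurable fun t : ℝ => a * t := measurable_id.const_mul a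
  have hpre : (a * ·) ⁻¹' Ioi (0 : ℝ) = Ioi 0 := by
    ext t
    simp [mul_pos_iff_of_pos_left ha]
  rw [← lintegral_map hφ hm, ← hpre, ← Measure.restrict_map hm measurableSet_Ioi,
    Real.map_volume_mul_left ha.ne', hpre, Measure.restrict_smul, lintegral_smul_measure,
    abs_of_pos (inv_pos.2 ha), smul_eq_mul]

theorem integH_const_mul (f : (Fin n → ℝ) → ℝ) (E : Set (Fin n → ℝ)) {a : ℝ} (ha : 0 < a) :
    integH n δ (fun x => a * f x) E = ENNReal.ofReal a * integH n δ f E := by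
  have hset : ∀ t : ℝ, {x | x ∈ E ∧ t < a * f x} = {x | x ∈ E ∧ a⁻¹ * t < f x} := fun t => by
    ext x
    simp only [mem_ofPred_eq, inv_mul_lt_iff₀ ha]
  simp only [integH, hset]
  rw [lintegral_Ioi_comp_const_mul (measurable_hContent_superlevel f E) (inv_pos.2 ha), inv_inv]

theorem integH_max_le (hδ : 0 < δ) (f g : (Fin n → ℝ) → ℝ) (E : Set (Fin n → ℝ)) :
    integH n δ (fun x => max (f x) (g x)) E ≤ integH n δ f E + integH n δ g E := by
  rw [integH, integH, integH, ← lintegral_add_left (measurable_hContent_superlevel f E)]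
  refine lintegral_mono fun t => (hContent_mono ?_).trans (hContent_union_le hδ _ _)
  rintro x ⟨hxE, hxt⟩
  exact (lt_max_iff.1 hxt).imp (⟨hxE, ·⟩) (⟨hxE, ·⟩)

theorem integH_add_le (hδ : 0 < δ) (f g : (Fin n → ℝ) → ℝ) (E : Set (Fin n → ℝ)) :
    integH n δ (fun x => f x + g x) E ≤ 2 * integH n δ f E + 2 * integH n δ g E :=
  calc integH n δ (fun x => f x + g x) E ≤ integH n δ (fun x => 2 * max (f x) (g x)) E :=
        integH_mono_fun fun x _ => by linarith [le_max_left (f x) (g x), le_max_right (f x) (g x)]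
    _ = 2 * integH n δ (fun x => max (f x) (g x)) E := by
        rw [integH_const_mul _ _ two_pos, ENNReal.ofReal_ofNat]
    _ ≤ 2 * integH n δ f E + 2 * integH n δ g E := by
        rw [← mul_add]
        gcongr
        exact integH_max_le hδ f g E

theorem hContent_superlevel_le_integH (f : (Fin n → ℝ) → ℝ) (E : Set (Fin n → ℝ)) {s : ℝ}
    (hs : 0 < s) : hContent n δ {x | x ∈ E ∧ s < f x} ≤ ENNReal.ofReal s⁻¹ * integH n δ f E := by
  have hmarkov : ENNReal.ofReal s * hContent n δ {x | x ∈ E ∧ s < f x} ≤ integH n δ f E :=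
    calc ENNReal.ofReal s * hContent n δ {x | x ∈ E ∧ s < f x}
        = ∫⁻ _ in Ioc (0 : ℝ) s, hContent n δ {x | x ∈ E ∧ s < f x} := by
          rw [setLIntegral_const, Real.volume_Ioc, sub_zero, mul_comm]
      _ ≤ ∫⁻ t in Ioc (0 : ℝ) s, hContent n δ {x | x ∈ E ∧ t < f x} :=
          setLIntegral_mono (measurable_hContent_superlevel f E) fun _ ht =>
            hContent_mono fun _ hx => ⟨hx.1, ht.2.trans_lt hx.2⟩
      _ ≤ integH n δ f E :=
          lintegral_mono' (Measure.restrict_mono Ioc_subset_Ioi_self le_rfl) le_rfl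
  calc hContent n δ {x | x ∈ E ∧ s < f x}
      = ENNReal.ofReal s⁻¹ * (ENNReal.ofReal s * hContent n δ {x | x ∈ E ∧ s < f x}) := by
        rw [← mul_assoc, ← ENNReal.ofReal_mul (inv_nonneg.2 hs.le), inv_mul_cancel₀ hs.ne',
          ENNReal.ofReal_one, one_mul]
    _ ≤ ENNReal.ofReal s⁻¹ * integH n δ f E := by gcongr

theorem hContent_pos_eq_zero_of_integH_eq_zero (hδ : 0 < δ) {f : (Fin n → ℝ) → ℝ}
    {E : Set (Fin n → ℝ)} (h : integH n δ f E = 0) : hContent n δ {x | x ∈ E ∧ 0 < f x} = 0 := by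
  have hunion : {x | x ∈ E ∧ 0 < f x} = ⋃ k : ℕ, {x | x ∈ E ∧ ((k : ℝ) + 1)⁻¹ < f x} := by
    ext x
    simp only [mem_ofPred_eq, mem_iUnion]
    refine ⟨fun ⟨hxE, hx⟩ => ?_, fun ⟨_, hxE, hx⟩ => ⟨hxE, lt_trans (by positivity) hx⟩⟩
    obtain ⟨k, hk⟩ := exists_nat_one_div_lt hx
    exact ⟨k, hxE, by simpa using hk⟩
  rw [hunion]
  refine measure_iUnion_null (μ := hContentOuterMeasure n hδ) fun k => le_antisymm ?_ bot_le
  show hContent n δ _ ≤ 0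
  simpa [h] using hContent_superlevel_le_integH (δ := δ) f E (s := ((k : ℝ) + 1)⁻¹) (by positivity)

theorem integH_le_diff_of_hContent_eq_zero (hδ : 0 < δ) {N : Set (Fin n → ℝ)}
    (hN : hContent n δ N = 0) (f : (Fin n → ℝ) → ℝ) (E : Set (Fin n → ℝ)) :
    integH n δ f E ≤ integH n δ f (E \ N) := by
  refine lintegral_mono fun t => ?_
  have hsub : {x | x ∈ E ∧ t < f x} ⊆ {x | x ∈ E \ N ∧ t < f x} ∪ N := by
    rintro x ⟨hxE, hxt⟩
    by_cases hxN : x ∈ N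
    · exact Or.inr hxN
    · exact Or.inl ⟨⟨hxE, hxN⟩, hxt⟩
  calc hContent n δ {x | x ∈ E ∧ t < f x}
      ≤ hContent n δ {x | x ∈ E \ N ∧ t < f x} + hContent n δ N :=
        (hContent_mono hsub).trans (hContent_union_le hδ _ _)
    _ = hContent n δ {x | x ∈ E \ N ∧ t < f x} := by rw [hN, add_zero]

end ChoquetIntegral

theorem QuasiCont.comp {n : ℕ} {δ : ℝ} (hδ : 0 < δ) {f : (Fin n → ℝ) → ℝ} {g : ℝ → ℝ}
    {S : Set ℝ} (hf : QuasiCont n δ f) (hg : ContinuousOn g S)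
    (hfS : AEContent n δ fun x => f x ∈ S) : QuasiCont n δ fun x => g (f x) := by
  intro ε hε
  obtain ⟨O₁, hO₁, hO₁ε, hfO₁⟩ := hf (ε / 2) (half_pos hε)
  obtain ⟨O₂, hO₂, hNO₂, hO₂ε⟩ := exists_isOpen_superset_hContent_lt hδ hfS (half_pos hε)
  refine ⟨O₁ ∪ O₂, hO₁.union hO₂, ?_, ?_⟩
  · calc hContent n δ (O₁ ∪ O₂) ≤ hContent n δ O₁ + hContent n δ O₂ := hContent_union_le hδ _ _
      _ < ENNReal.ofReal (ε / 2) + ENNReal.ofReal (ε / 2) := ENNReal.add_lt_add hO₁ε hO₂ε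
      _ = ENNReal.ofReal ε := by
        rw [← ENNReal.ofReal_add (half_pos hε).le (half_pos hε).le, add_halves]
  · refine hg.comp (hfO₁.mono (compl_subset_compl.2 subset_union_left)) fun x hx => ?_
    by_contra hxS
    exact hx (Or.inr (hNO₂ hxS))

theorem abs_log_sub_log_le {x t q : ℝ} (hx : 0 < x) (ht : 0 < t) (hq : 0 < q) :
    |log x - log t| ≤ t⁻¹ * x + q⁻¹ * t ^ q * x ^ (-q) := by
  have hxt := log_le_sub_one_of_pos (div_pos hx ht)
  have htx := log_le_sub_one_of_pos (mul_pos (rpow_pos_of_pos ht q) (rpow_pos_of_pos hx (-q)))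
  rw [log_div hx.ne' ht.ne'] at hxt
  rw [log_mul (rpow_pos_of_pos ht q).ne' (rpow_pos_of_pos hx (-q)).ne', log_rpow ht,
    log_rpow hx] at htx
  have hlog : log t - log x ≤ q⁻¹ * (t ^ q * x ^ (-q)) := by
    rw [le_inv_mul_iff₀ hq]
    linarith
  have h₁ : 0 ≤ x / t := by positivity
  have h₂ : 0 ≤ q⁻¹ * (t ^ q * x ^ (-q)) := by positivity
  rw [abs_le, mul_assoc, inv_mul_eq_div]
  constructor <;> linarith

theorem rpow_le_rpow_sub_mul_rpow {κ₀ κ e m : ℝ} (hκ₀ : 0 < κ₀) (hκ₀κ : κ₀ ≤ κ) (he : e ≤ m) :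
    κ ^ e ≤ κ₀ ^ (e - m) * κ ^ m :=
  calc κ ^ e = κ ^ (e - m) * κ ^ m := by rw [← rpow_add (hκ₀.trans_le hκ₀κ), sub_add_cancel]
    _ ≤ κ₀ ^ (e - m) * κ ^ m :=
      mul_le_mul_of_nonneg_right (rpow_le_rpow_of_nonpos hκ₀ hκ₀κ (sub_nonpos.2 he))
        (rpow_nonneg (hκ₀.le.trans hκ₀κ) m)

/-- `κ₀` is the lower bound on `[w]_{A_{p,δ}}`, `q = 1/(p-1)`, that Chebyshev's inequality
forces (see `two_add_le_bmoConst_mul`). -/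
def bmoConst (q : ℝ) : ℝ :=
  let κ₀ : ℝ := ((2 : ℝ) ^ (-q - 2)) ^ q⁻¹
  2 * κ₀ ^ (-max 1 q) + 2 * q⁻¹ * κ₀ ^ (q - max 1 q)

theorem bmoConst_pos {q : ℝ} (hq : 0 < q) : 0 < bmoConst q := by
  simp only [bmoConst]
  positivity

/-- `α`, `β` stand for the averages of `w`, `w ^ (-q)` over a cube: Chebyshev's inequality at
`s = 2α` bounds `αᵠβ` below, and the `A_{p,δ}` bound `κ` bounds it above. -/
theorem two_add_le_bmoConst_mul {q α β κ : ℝ} (hq : 0 < q) (hα : 0 < α) (hβ : 0 ≤ β)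
    (hcheb : ∀ s, 0 < s → 1 ≤ s⁻¹ * α + 2 * s ^ q * β) (hap : α * β ^ q⁻¹ ≤ κ) :
    2 + 2 * q⁻¹ * (α ^ q * β) ≤ bmoConst q * κ ^ max 1 q := by
  have hκ : 0 ≤ κ := (by positivity : 0 ≤ α * β ^ q⁻¹).trans hap
  have hlow : (2 : ℝ) ^ (-q - 2) ≤ α ^ q * β := by
    have h := hcheb (2 * α) (by positivity)
    rw [mul_rpow zero_le_two hα.le, show (2 * α)⁻¹ * α = 1 / 2 by field_simp] at h
    rw [rpow_sub two_pos, rpow_neg zero_le_two]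
    field_simp
    linarith
  have hup : α ^ q * β ≤ κ ^ q :=
    calc α ^ q * β = (α * β ^ q⁻¹) ^ q := by
          rw [mul_rpow hα.le (by positivity), rpow_inv_rpow hβ hq.ne']
      _ ≤ κ ^ q := rpow_le_rpow (by positivity) hap hq.le
  set m := max 1 q
  set κ₀ : ℝ := ((2 : ℝ) ^ (-q - 2)) ^ q⁻¹
  have hκ₀κ : κ₀ ≤ κ :=
    calc κ₀ ≤ (κ ^ q) ^ q⁻¹ := rpow_le_rpow (by positivity) (hlow.trans hup) (inv_nonneg.2 hq.le)
      _ = κ := rpow_rpow_inv hκ hq.ne'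
  calc 2 + 2 * q⁻¹ * (α ^ q * β) ≤ 2 * κ ^ (0 : ℝ) + 2 * q⁻¹ * κ ^ q := by
        rw [rpow_zero, mul_one]
        gcongr
    _ ≤ 2 * (κ₀ ^ (0 - m) * κ ^ m) + 2 * q⁻¹ * (κ₀ ^ (q - m) * κ ^ m) := by
        gcongr
        · exact rpow_le_rpow_sub_mul_rpow (by positivity) hκ₀κ (zero_le_one.trans (le_max_left 1 q))
        · exact rpow_le_rpow_sub_mul_rpow (by positivity) hκ₀κ (le_max_right 1 q)
    _ = bmoConst q * κ ^ m := by
        simp only [bmoConst, zero_sub]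
        ring

section Weights

variable {n : ℕ} {δ p : ℝ} {w : (Fin n → ℝ) → ℝ}

theorem integH_abs_log_sub_log_le (hδ : 0 < δ) (hw : hContent n δ {x | w x ≤ 0} = 0) {q t : ℝ}
    (hq : 0 < q) (ht : 0 < t) (E : Set (Fin n → ℝ)) :
    integH n δ (fun x => |log (w x) - log t|) E ≤
      ENNReal.ofReal (2 * t⁻¹) * integH n δ w E +
        ENNReal.ofReal (2 * (q⁻¹ * t ^ q)) * integH n δ (fun x => w x ^ (-q)) E := by
  have hc : 0 < q⁻¹ * t ^ q := by positivity
  calc integH n δ (fun x => |log (w x) - log t|) E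
      ≤ integH n δ (fun x => |log (w x) - log t|) (E \ {x | w x ≤ 0}) :=
        integH_le_diff_of_hContent_eq_zero hδ hw _ _
    _ ≤ integH n δ (fun x => t⁻¹ * w x + q⁻¹ * t ^ q * w x ^ (-q)) (E \ {x | w x ≤ 0}) :=
        integH_mono_fun fun x hx => abs_log_sub_log_le (not_le.1 hx.2) ht hq
    _ ≤ integH n δ (fun x => t⁻¹ * w x + q⁻¹ * t ^ q * w x ^ (-q)) E :=
        integH_mono_set sdiff_subset
    _ ≤ 2 * integH n δ (fun x => t⁻¹ * w x) E +
          2 * integH n δ (fun x => q⁻¹ * t ^ q * w x ^ (-q)) E :=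
        integH_add_le hδ _ _ _
    _ = _ := by
        rw [integH_const_mul _ _ (inv_pos.2 ht), integH_const_mul _ _ hc,
          ENNReal.ofReal_mul zero_le_two, ENNReal.ofReal_mul zero_le_two, ENNReal.ofReal_ofNat,
          mul_assoc, mul_assoc]

/-- Every point of `E` with `0 < w ≤ s` lies in `{s ^ (-q) / 2 < w ^ (-q)}`; apply Chebyshev's
inequality to both superlevel sets. -/
theorem hContent_le_integH_add_integH_rpow_neg (hδ : 0 < δ) (hw : hContent n δ {x | w x ≤ 0} = 0)
    (E : Set (Fin n → ℝ)) {q s : ℝ} (hq : 0 ≤ q) (hs : 0 < s) :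
    hContent n δ E ≤ ENNReal.ofReal s⁻¹ * integH n δ w E +
      ENNReal.ofReal (2 * s ^ q) * integH n δ (fun x => w x ^ (-q)) E := by
  have hs' : 0 < s ^ (-q) / 2 := by positivity
  have hsub : E ⊆ ({x | x ∈ E ∧ s < w x} ∪ {x | x ∈ E ∧ s ^ (-q) / 2 < w x ^ (-q)}) ∪
      {x | w x ≤ 0} := by
    intro x hx
    by_cases hsw : s < w x
    · exact Or.inl (Or.inl ⟨hx, hsw⟩)
    by_cases hw0 : w x ≤ 0
    · exact Or.inr hw0
    refine Or.inl (Or.inr ⟨hx, ?_⟩)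
    have := rpow_le_rpow_of_nonpos (not_le.1 hw0) (not_lt.1 hsw) (neg_nonpos.2 hq)
    linarith
  have hinv : (s ^ (-q) / 2)⁻¹ = 2 * s ^ q := by
    rw [inv_div, rpow_neg hs.le, div_inv_eq_mul]
  calc hContent n δ E
      ≤ hContent n δ {x | x ∈ E ∧ s < w x} +
          hContent n δ {x | x ∈ E ∧ s ^ (-q) / 2 < w x ^ (-q)} + hContent n δ {x | w x ≤ 0} :=
        (hContent_mono hsub).trans <| (hContent_union_le hδ _ _).trans <|
          add_le_add_left (hContent_union_le hδ _ _) _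
    _ ≤ _ := by
        rw [hw, add_zero, ← hinv]
        gcongr
        · exact hContent_superlevel_le_integH w E hs
        · exact hContent_superlevel_le_integH (fun x => w x ^ (-q)) E hs'

theorem IsWeight.hContent_nonpos (hw : IsWeight n δ w) : hContent n δ {x | w x ≤ 0} = 0 := by
  simpa only [AEContent, not_lt] using hw.2

theorem IsWeight.integH_cube_ne_top (hw : IsWeight n δ w) (Q : Cube n) :
    integH n δ w Q.toSet ≠ ⊤ :=
  ((integH_mono_fun fun x _ => le_abs_self (w x)).trans
    (integH_mono_set Q.toSet_subset_Icc)).trans_lt (hw.1.2 _ isCompact_Icc) |>.ne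

theorem IsWeight.integH_cube_ne_zero (hδ : 0 < δ) (hδn : δ ≤ n) (hw : IsWeight n δ w)
    (Q : Cube n) : integH n δ w Q.toSet ≠ 0 := by
  intro h
  refine hContent_cube_ne_zero hδ.le hδn Q (le_antisymm ?_ bot_le)
  calc hContent n δ Q.toSet
      ≤ hContent n δ {x | x ∈ Q.toSet ∧ 0 < w x} + hContent n δ {x | w x ≤ 0} :=
        (hContent_mono fun x hx => (lt_or_ge 0 (w x)).imp (⟨hx, ·⟩) id).trans
          (hContent_union_le hδ _ _)
    _ = 0 := by rw [hContent_pos_eq_zero_of_integH_eq_zero hδ h, hw.hContent_nonpos, add_zero]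

variable (δ p w) in
theorem le_apConst (Q : Cube n) :
    integH n δ w Q.toSet / hContent n δ Q.toSet *
        (integH n δ (fun x => w x ^ (-(1 / (p - 1)))) Q.toSet / hContent n δ Q.toSet) ^ (p - 1) ≤
      apConst n δ p w := by
  unfold apConst
  exact le_iSup_of_le Q le_rfl

theorem MemAp.integH_rpow_cube_ne_top (hδ : 0 < δ) (hδn : δ ≤ n) (hp : 1 < p)
    (hw : MemAp n δ p w) (Q : Cube n) :
    integH n δ (fun x => w x ^ (-(1 / (p - 1)))) Q.toSet ≠ ⊤ := by
  intro htop
  have hAw : integH n δ w Q.toSet / hContent n δ Q.toSet ≠ 0 :=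
    ENNReal.div_ne_zero.2 ⟨hw.1.integH_cube_ne_zero hδ hδn Q, hContent_cube_ne_top hδ Q⟩
  have hQ := le_apConst δ p w Q
  rw [htop, ENNReal.top_div_of_ne_top (hContent_cube_ne_top hδ Q),
    ENNReal.top_rpow_of_pos (sub_pos.2 hp), ENNReal.mul_top hAw] at hQ
  exact hw.2.ne (top_le_iff.1 hQ)

theorem MemAp.iInf_integH_abs_log_sub_div_le (hδ : 0 < δ) (hδn : δ ≤ n) (hp : 1 < p)
    (hw : MemAp n δ p w) (Q : Cube n) :
    ⨅ c : ℝ, integH n δ (fun x => |log (w x) - c|) Q.toSet / hContent n δ Q.toSet ≤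
      ENNReal.ofReal (bmoConst (1 / (p - 1))) * apConst n δ p w ^ max 1 (1 / (p - 1)) := by
  have hσ := hw.integH_rpow_cube_ne_top hδ hδn hp Q
  have hQ := le_apConst δ p w Q
  set q := 1 / (p - 1) with hq_def
  have hq : 0 < q := one_div_pos.2 (sub_pos.2 hp)
  have hw0 := hw.1.hContent_nonpos
  set H := hContent n δ Q.toSet
  have hH0 : H ≠ 0 := hContent_cube_ne_zero hδ.le hδn Q
  have hHtop : H ≠ ⊤ := hContent_cube_ne_top hδ Q
  set Iw := integH n δ w Q.toSet
  set Iσ := integH n δ (fun x => w x ^ (-q)) Q.toSet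
  have hIw0 : Iw / H ≠ 0 := ENNReal.div_ne_zero.2 ⟨hw.1.integH_cube_ne_zero hδ hδn Q, hHtop⟩
  have hIw : Iw / H ≠ ⊤ := ENNReal.div_ne_top (hw.1.integH_cube_ne_top Q) hH0
  obtain ⟨α, hα, hAw⟩ : ∃ α : ℝ, 0 < α ∧ Iw / H = ENNReal.ofReal α :=
    ⟨_, ENNReal.toReal_pos hIw0 hIw, (ENNReal.ofReal_toReal hIw).symm⟩
  obtain ⟨β, hβ, hAσ⟩ : ∃ β : ℝ, 0 ≤ β ∧ Iσ / H = ENNReal.ofReal β :=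
    ⟨_, ENNReal.toReal_nonneg, (ENNReal.ofReal_toReal (ENNReal.div_ne_top hσ hH0)).symm⟩
  have havg : ∀ {I : ℝ≥0∞} {c₁ c₂ : ℝ}, 0 ≤ c₁ → 0 ≤ c₂ →
      I ≤ ENNReal.ofReal c₁ * Iw + ENNReal.ofReal c₂ * Iσ →
        I / H ≤ ENNReal.ofReal (c₁ * α + c₂ * β) := fun hc₁ hc₂ hI => by
    rw [ENNReal.ofReal_add (by positivity) (by positivity), ENNReal.ofReal_mul hc₁,
      ENNReal.ofReal_mul hc₂, ← hAw, ← hAσ, ← mul_div_assoc, ← mul_div_assoc, ← ENNReal.add_div]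
    exact ENNReal.div_le_div_right hI H
  have hcheb : ∀ s, 0 < s → 1 ≤ s⁻¹ * α + 2 * s ^ q * β := fun s hs => by
    have h := havg (inv_nonneg.2 hs.le) (by positivity)
      (hContent_le_integH_add_integH_rpow_neg hδ hw0 Q.toSet hq.le hs)
    rwa [ENNReal.div_self hH0 hHtop, ENNReal.one_le_ofReal] at h
  have hap : α * β ^ q⁻¹ ≤ (apConst n δ p w).toReal := by
    rwa [hAw, hAσ, ENNReal.ofReal_rpow_of_nonneg hβ (sub_pos.2 hp).le,
      ← ENNReal.ofReal_mul hα.le, ENNReal.ofReal_le_iff_le_toReal hw.2.ne,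
      show p - 1 = q⁻¹ by rw [hq_def, one_div, inv_inv]] at hQ
  calc ⨅ c : ℝ, integH n δ (fun x => |log (w x) - c|) Q.toSet / H
      ≤ integH n δ (fun x => |log (w x) - log α|) Q.toSet / H := iInf_le _ (log α)
    _ ≤ ENNReal.ofReal (2 + 2 * q⁻¹ * (α ^ q * β)) := by
        convert havg (by positivity) (by positivity)
          (integH_abs_log_sub_log_le hδ hw0 hq hα Q.toSet) using 2
        field_simp
    _ ≤ ENNReal.ofReal (bmoConst q * (apConst n δ p w).toReal ^ max 1 q) :=
        ENNReal.ofReal_le_ofReal (two_add_le_bmoConst_mul hq hα hβ hcheb hap)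
    _ = ENNReal.ofReal (bmoConst q) * apConst n δ p w ^ max 1 q := by
        rw [ENNReal.ofReal_mul (bmoConst_pos hq).le, ← ENNReal.ofReal_rpow_of_nonneg
          ENNReal.toReal_nonneg (by positivity), ENNReal.ofReal_toReal hw.2.ne]

theorem MemAp.integH_abs_log_lt_top (hδ : 0 < δ) (hδn : δ ≤ n) (hp : 1 < p) (hw : MemAp n δ p w)
    {K : Set (Fin n → ℝ)} (hK : IsCompact K) : integH n δ (fun x => |log (w x)|) K < ⊤ := by
  obtain ⟨Q, hKQ⟩ := hK.exists_subset_cube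
  have hbound := integH_abs_log_sub_log_le hδ hw.1.hContent_nonpos
    (one_div_pos.2 (sub_pos.2 hp)) one_pos K
  simp only [log_one, sub_zero] at hbound
  refine hbound.trans_lt (ENNReal.add_lt_top.2 ⟨ENNReal.mul_lt_top ENNReal.ofReal_lt_top ?_,
    ENNReal.mul_lt_top ENNReal.ofReal_lt_top ?_⟩)
  · exact (integH_mono_fun fun x _ => le_abs_self (w x)).trans_lt (hw.1.1.2 K hK)
  · exact (integH_mono_set hKQ).trans_lt (hw.integH_rpow_cube_ne_top hδ hδn hp Q).lt_top

end Weights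

theorem stmt0_general (n : ℕ) (δ p : ℝ) (hδ0 : 0 < δ) (hδn : δ ≤ n) (hp : 1 < p) :
    ∃ C : ℝ, 0 < C ∧ ∀ w : (Fin n → ℝ) → ℝ, MemAp n δ p w →
      MemBMO n δ (fun x => Real.log (w x)) ∧
        bmoNorm n δ (fun x => Real.log (w x)) ≤
          ENNReal.ofReal C * apConst n δ p w ^ (max 1 (1 / (p - 1))) := by
  refine ⟨bmoConst (1 / (p - 1)), bmoConst_pos (one_div_pos.2 (sub_pos.2 hp)), fun w hw => ?_⟩
  have hnorm : bmoNorm n δ (fun x => log (w x)) ≤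
      ENNReal.ofReal (bmoConst (1 / (p - 1))) * apConst n δ p w ^ max 1 (1 / (p - 1)) :=
    iSup_le (hw.iInf_integH_abs_log_sub_div_le hδ0 hδn hp)
  have hlog : QuasiCont n δ fun x => log (w x) :=
    hw.1.1.1.comp hδ0 (continuousOn_log.mono fun _ hx => (mem_Ioi.1 hx).ne') hw.1.2
  refine ⟨⟨⟨hlog, fun K hK => hw.integH_abs_log_lt_top hδ0 hδn hp hK⟩, hnorm.trans_lt ?_⟩, hnorm⟩
  exact ENNReal.mul_lt_top ENNReal.ofReal_lt_top
    (ENNReal.rpow_lt_top_of_nonneg (by positivity) hw.2.ne)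

/-- A_{p,δ} weights have logarithms in BMO(ℝⁿ, ℋ^δ_∞), quantitatively. -/
theorem stmt0 (n : ℕ) (hn : 1 ≤ n) (δ p : ℝ) (hδ0 : 0 < δ) (hδn : δ ≤ n) (hp : 1 < p) :
    ∃ C : ℝ, 0 < C ∧ ∀ w : (Fin n → ℝ) → ℝ, MemAp n δ p w →
      MemBMO n δ (fun x => Real.log (w x)) ∧
        bmoNorm n δ (fun x => Real.log (w x)) ≤
          ENNReal.ofReal C * apConst n δ p w ^ (max 1 (1 / (p - 1))) :=
  stmt0_general n δ p hδ0 hδn hp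
end
end

section
/- Let n ≥ 1 be an integer, δ ∈ (0, n], q ∈ [1, ∞), r ∈ (0, q), C > 0 and A ≥ 0. Let g : ℝⁿ → ℝ satisfy λ · (ℋ^δ_∞({x ∈ ℝⁿ : |g(x)| > λ}))^{1/q} ≤ C · A for every λ > 0. Then for every subset E ⊆ ℝⁿ with ℋ^δ_∞(E) < ∞: (∫_E |g|^r dℋ^δ_∞)^{1/r} ≤ C · (q/(q − r))^{1/r} · ℋ^δ_∞(E)^{1/r − 1/q} · A. -/
open scoped ENNReal
open Set MeasureTheory

noncomputable section

/-!
The weak-type bound says `ℋ^δ_∞({|g| > λ}) ≤ (CA/λ)^q`, so the distribution function of `|g|^r`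
on `E` is at most `min (ℋ^δ_∞(E)) ((CA)^q t^(-q/r))`. Since `q/r > 1` the second term is integrable
at infinity; splitting the Choquet integral at the crossing point of the two bounds gives
`∫_E |g|^r dℋ^δ_∞ ≤ q/(q-r) · ℋ^δ_∞(E)^(1-r/q) · (CA)^r`.
-/

open scoped NNReal

theorem hContent_mono_s18 (n : ℕ) (δ : ℝ) : Monotone (hContent n δ) :=
  fun _ _ h => le_iInf₂ fun Qs hQs => iInf₂_le Qs (h.trans hQs)

theorem lintegral_Ioi_min_const_rpow_le {a b p : ℝ} (ha : 0 ≤ a) (hb : 0 ≤ b) (hp : 1 < p) :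
    ∫⁻ t in Ioi (0 : ℝ), min (ENNReal.ofReal a) (ENNReal.ofReal (b * t ^ (-p))) ≤
      ENNReal.ofReal (p / (p - 1) * a ^ (1 - 1 / p) * b ^ (1 / p)) := by
  rcases ha.eq_or_lt with rfl | ha
  · simp
  rcases hb.eq_or_lt with rfl | hb
  · simp
  -- split at the crossing point `t₀`, where `b * t₀ ^ (-p) = a`
  set t₀ := (b / a) ^ (1 / p) with ht₀_def
  have ht₀ : 0 < t₀ := by positivity
  have ht₀_pow : t₀ ^ (-p) = a / b := by
    rw [Real.rpow_neg ht₀.le, ← Real.rpow_mul (by positivity), one_div_mul_cancel (by linarith),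
      Real.rpow_one, inv_div]
  have htail : ∫⁻ t in Ioi t₀, ENNReal.ofReal (b * t ^ (-p)) =
      ENNReal.ofReal (a * t₀ / (p - 1)) := by
    have hint : IntegrableOn (fun t : ℝ => b * t ^ (-p)) (Ioi t₀) :=
      (integrableOn_Ioi_rpow_of_lt (by linarith) ht₀).const_mul b
    rw [← ofReal_integral_eq_lintegral_ofReal hint (ae_restrict_of_forall_mem measurableSet_Ioi
      fun t ht => by have : 0 < t := ht₀.trans ht; positivity), integral_const_mul,
      integral_Ioi_rpow_of_lt (by linarith) ht₀, Real.rpow_add ht₀, Real.rpow_one, ht₀_pow,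
      show -p + 1 = -(p - 1) by ring]
    congr 1
    field_simp
  calc ∫⁻ t in Ioi (0 : ℝ), min (ENNReal.ofReal a) (ENNReal.ofReal (b * t ^ (-p)))
      ≤ (∫⁻ _ in Ioc (0 : ℝ) t₀, ENNReal.ofReal a) +
          ∫⁻ t in Ioi t₀, ENNReal.ofReal (b * t ^ (-p)) := by
        rw [← Ioc_union_Ioi_eq_Ioi ht₀.le]
        exact (lintegral_union_le _ _ _).trans <| add_le_add
          (lintegral_mono fun _ => min_le_left _ _) (lintegral_mono fun _ => min_le_right _ _)
    _ = ENNReal.ofReal (a * t₀) + ENNReal.ofReal (a * t₀ / (p - 1)) := by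
        rw [setLIntegral_const, Real.volume_Ioc, sub_zero, ← ENNReal.ofReal_mul ha.le, htail]
    _ = ENNReal.ofReal (p / (p - 1) * a ^ (1 - 1 / p) * b ^ (1 / p)) := by
        have hp1 : p - 1 ≠ 0 := by linarith
        rw [← ENNReal.ofReal_add (by positivity) (by have := sub_pos.2 hp; positivity)]
        congr 1
        rw [ht₀_def, Real.div_rpow hb.le ha.le, Real.rpow_sub ha, Real.rpow_one]
        field_simp
        ring

theorem ENNReal.le_ofReal_mul_rpow_neg_of_mul_rpow_le {X : ℝ≥0∞} {M : ℝ≥0} {lam q : ℝ}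
    (hlam : 0 < lam) (hq : 0 < q) (h : ENNReal.ofReal lam * X ^ (1 / q) ≤ M) :
    X ≤ ENNReal.ofReal ((M : ℝ) ^ q * lam ^ (-q)) := by
  have hroot : X ^ (1 / q) ≤ ENNReal.ofReal (M / lam) := by
    rw [ENNReal.ofReal_div_of_pos hlam, ENNReal.ofReal_coe_nnreal,
      ENNReal.le_div_iff_mul_le (Or.inl (by simpa using hlam)) (Or.inl ENNReal.ofReal_ne_top),
      mul_comm]
    exact h
  calc X = (X ^ (1 / q)) ^ q := by
        rw [← ENNReal.rpow_mul, one_div_mul_cancel hq.ne', ENNReal.rpow_one]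
    _ ≤ ENNReal.ofReal (M / lam) ^ q := ENNReal.rpow_le_rpow hroot hq.le
    _ = ENNReal.ofReal ((M : ℝ) ^ q * lam ^ (-q)) := by
        rw [ENNReal.ofReal_rpow_of_nonneg (by positivity) hq.le, Real.div_rpow M.coe_nonneg hlam.le,
          Real.rpow_neg hlam.le, div_eq_mul_inv]

section WeakType

variable {α : Type*} {μ : Set α → ℝ≥0∞} {q r : ℝ} {M : ℝ≥0} {g : α → ℝ}

theorem distribution_abs_rpow_le_min_of_weakType (hμ : Monotone μ) (hr : 0 < r) (hq : 0 < q)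
    (hg : ∀ lam : ℝ, 0 < lam → ENNReal.ofReal lam * μ {x | lam < |g x|} ^ (1 / q) ≤ M)
    (E : Set α) {t : ℝ} (ht : 0 < t) :
    μ {x | x ∈ E ∧ t < |g x| ^ r} ≤
      min (μ E) (ENNReal.ofReal ((M : ℝ) ^ q * t ^ (-(q / r)))) := by
  refine le_min (hμ fun x hx => hx.1) ?_
  have hsub : {x | x ∈ E ∧ t < |g x| ^ r} ⊆ {x | t ^ r⁻¹ < |g x|} := fun x hx =>
    (Real.rpow_inv_lt_iff_of_pos ht.le (abs_nonneg _) hr).2 hx.2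
  calc μ {x | x ∈ E ∧ t < |g x| ^ r}
      ≤ ENNReal.ofReal ((M : ℝ) ^ q * (t ^ r⁻¹) ^ (-q)) :=
        ENNReal.le_ofReal_mul_rpow_neg_of_mul_rpow_le (by positivity) hq
          ((hg _ (by positivity)).trans'
            (mul_le_mul_right (ENNReal.rpow_le_rpow (hμ hsub) (by positivity)) _))
    _ = ENNReal.ofReal ((M : ℝ) ^ q * t ^ (-(q / r))) := by
        rw [← Real.rpow_mul ht.le, inv_mul_eq_div, neg_div]

theorem choquet_abs_rpow_le_of_weakType (hμ : Monotone μ) (hr : 0 < r) (hrq : r < q)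
    (hg : ∀ lam : ℝ, 0 < lam → ENNReal.ofReal lam * μ {x | lam < |g x|} ^ (1 / q) ≤ M)
    {E : Set α} (hE : μ E < ⊤) :
    (∫⁻ t in Ioi (0 : ℝ), μ {x | x ∈ E ∧ t < |g x| ^ r}) ^ (1 / r) ≤
      ENNReal.ofReal ((q / (q - r)) ^ (1 / r)) * μ E ^ (1 / r - 1 / q) * M := by
  have hq : 0 < q := hr.trans hrq
  set a := (μ E).toReal
  have hEa : μ E = ENNReal.ofReal a := (ENNReal.ofReal_toReal hE.ne).symm
  have hint : ∫⁻ t in Ioi (0 : ℝ), μ {x | x ∈ E ∧ t < |g x| ^ r} ≤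
      ENNReal.ofReal (q / r / (q / r - 1) * a ^ (1 - 1 / (q / r)) *
        ((M : ℝ) ^ q) ^ (1 / (q / r))) :=
    (setLIntegral_mono' measurableSet_Ioi fun t ht =>
        hEa ▸ distribution_abs_rpow_le_min_of_weakType hμ hr hq hg E ht).trans
      (lintegral_Ioi_min_const_rpow_le ENNReal.toReal_nonneg (by positivity)
        ((one_lt_div hr).2 hrq))
  calc (∫⁻ t in Ioi (0 : ℝ), μ {x | x ∈ E ∧ t < |g x| ^ r}) ^ (1 / r)
      ≤ ENNReal.ofReal (q / r / (q / r - 1) * a ^ (1 - 1 / (q / r)) *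
          ((M : ℝ) ^ q) ^ (1 / (q / r))) ^ (1 / r) := by gcongr
    _ = ENNReal.ofReal ((q / (q - r)) ^ (1 / r) * a ^ (1 / r - 1 / q) * M) := by
        have hqr : 0 < q - r := sub_pos.2 hrq
        have hconst : q / r / (q / r - 1) = q / (q - r) := by field_simp
        rw [hconst, ENNReal.ofReal_rpow_of_nonneg (by positivity) (by positivity), one_div_div,
          Real.mul_rpow (by positivity) (by positivity),
          Real.mul_rpow (by positivity) (by positivity),
          ← Real.rpow_mul (by positivity), ← Real.rpow_mul (by positivity),
          ← Real.rpow_mul M.coe_nonneg]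
        congr 3
        · field_simp
        · field_simp
          exact Real.rpow_one _
    _ = ENNReal.ofReal ((q / (q - r)) ^ (1 / r)) * μ E ^ (1 / r - 1 / q) * M := by
        have hexp : 0 ≤ 1 / r - 1 / q := sub_nonneg.2 (one_div_le_one_div_of_le hr hrq.le)
        rw [ENNReal.ofReal_mul (by positivity), ENNReal.ofReal_mul (by positivity), hEa,
          ENNReal.ofReal_rpow_of_nonneg ENNReal.toReal_nonneg hexp, ENNReal.ofReal_coe_nnreal]

end WeakType

theorem stmt18_general (n : ℕ) (δ : ℝ)
    (q r C A : ℝ) (hr0 : 0 < r) (hrq : r < q) (hC : 0 < C)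
    (g : (Fin n → ℝ) → ℝ)
    (hg : ∀ lam : ℝ, 0 < lam →
      ENNReal.ofReal lam * hContent n δ {x | lam < |g x|} ^ (1 / q) ≤
        ENNReal.ofReal (C * A)) :
    ∀ E : Set (Fin n → ℝ), hContent n δ E < ⊤ →
      (integH n δ (fun x => |g x| ^ r) E) ^ (1 / r) ≤
        ENNReal.ofReal (C * (q / (q - r)) ^ (1 / r)) *
          hContent n δ E ^ (1 / r - 1 / q) * ENNReal.ofReal A := by
  intro E hE
  -- `ENNReal.ofReal (C * A)` is by definition the coercion of `(C * A).toNNReal`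
  calc (integH n δ (fun x => |g x| ^ r) E) ^ (1 / r)
      ≤ ENNReal.ofReal ((q / (q - r)) ^ (1 / r)) * hContent n δ E ^ (1 / r - 1 / q) *
          ENNReal.ofReal (C * A) :=
        choquet_abs_rpow_le_of_weakType (M := (C * A).toNNReal) (hContent_mono_s18 n δ) hr0 hrq hg hE
    _ = ENNReal.ofReal (C * (q / (q - r)) ^ (1 / r)) *
          hContent n δ E ^ (1 / r - 1 / q) * ENNReal.ofReal A := by
        rw [ENNReal.ofReal_mul hC.le, ENNReal.ofReal_mul hC.le]
        ring

/-- Kolmogorov-type inequality for the Hausdorff content. -/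
theorem stmt18 (n : ℕ) (hn : 1 ≤ n) (δ : ℝ) (hδ0 : 0 < δ) (hδn : δ ≤ n)
    (q r C A : ℝ) (hq : 1 ≤ q) (hr0 : 0 < r) (hrq : r < q) (hC : 0 < C) (hA : 0 ≤ A)
    (g : (Fin n → ℝ) → ℝ)
    (hg : ∀ lam : ℝ, 0 < lam →
      ENNReal.ofReal lam * hContent n δ {x | lam < |g x|} ^ (1 / q) ≤
        ENNReal.ofReal (C * A)) :
    ∀ E : Set (Fin n → ℝ), hContent n δ E < ⊤ →
      (integH n δ (fun x => |g x| ^ r) E) ^ (1 / r) ≤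
        ENNReal.ofReal (C * (q / (q - r)) ^ (1 / r)) *
          hContent n δ E ^ (1 / r - 1 / q) * ENNReal.ofReal A :=
  stmt18_general n δ q r C A hr0 hrq hC g hg
end
end
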